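/- Suppose ρ : ℕ⁺ → K is a weight function and f(x) ∈ K[[x]] with f(0) = 0 satisfies Σ_{n≥1} (Σ_{T ∈ PT(n)} ∏_{v ∈ T} ρ(h_v)) x^n = f(x), where PT(n) is the set of plane trees with n vertices. Then for all n ≥ 1 with [x^{n-1}](1/(1-f(x))) ≠ 0, ρ(n) = [x^n]f(x) / [x^{n-1}](1/(1-f(x))). -/

import Mathlib

/-- Plane trees: nonempty rooted trees whose subtrees at each vertex are linearly ordered. -/
inductive PTree : Type
  | node : List PTree → PTree

namespace PTree

mutual
/-- The number of vertices of a plane tree. -/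
def size : PTree → ℕ
  | .node cs => sizeList cs + 1
/-- The total number of vertices of a plane forest (a list of plane trees). -/
def sizeList : List PTree → ℕ
  | [] => 0
  | t :: ts => size t + sizeList ts
end

mutual
/-- The multiset of hook lengths of a plane tree: the hook length of a vertex
is the number of its descendants, counting the vertex itself. -/
def hooks : PTree → Multiset ℕ+
  | .node cs => ⟨sizeList cs + 1, Nat.succ_pos _⟩ ::ₘ hooksList cs
/-- The multiset of hook lengths of a plane forest. -/
def hooksList : List PTree → Multiset ℕ+
  | [] => 0
  | t :: ts => hooks t + hooksList ts
end

end PTree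


/-!
Let `G(x)` be the generating function of plane forests (lists of plane trees), each weighted by
`∏_v ρ(h_v)`. Splitting off the first tree of a nonempty forest gives `G = 1 + f G`, so
`G = 1/(1 - f)`. Deleting the root of a tree with `n` vertices leaves a forest with `n - 1`
vertices and the same hook lengths, except for the root's hook `n`; hence
`[xⁿ] f = ρ(n) [xⁿ⁻¹] G`.
-/

namespace PowerSeries

open Finset

variable {α β R : Type*} [CommSemiring R]

noncomputable def ofGrading (size : α → ℕ) (wt : α → R) : R⟦X⟧ :=
  mk fun n => ∑ᶠ x : {x // size x = n}, wt x

@[simp]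
theorem coeff_ofGrading (size : α → ℕ) (wt : α → R) (n : ℕ) :
    coeff n (ofGrading size wt) = ∑ᶠ x : {x // size x = n}, wt x :=
  coeff_mk _ _

def sigmaAntidiagonalEquiv (f : α → ℕ) (g : β → ℕ) (n : ℕ) :
    {z : α × β // f z.1 + g z.2 = n} ≃
      Σ p : antidiagonal n, {x // f x = p.1.1} × {y // g y = p.1.2} where
  toFun z := ⟨⟨(f z.1.1, g z.1.2), mem_antidiagonal.2 z.2⟩, ⟨z.1.1, rfl⟩, ⟨z.1.2, rfl⟩⟩
  invFun w := ⟨(w.2.1, w.2.2), by rw [w.2.1.2, w.2.2.2]; exact mem_antidiagonal.1 w.1.2⟩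
  left_inv _ := rfl
  right_inv := by
    rintro ⟨⟨⟨i, j⟩, h⟩, ⟨x, hx : f x = i⟩, ⟨y, hy : g y = j⟩⟩
    subst hx hy
    rfl

theorem ofGrading_mul (f : α → ℕ) (g : β → ℕ) (a : α → R) (b : β → R)
    [∀ n, Finite {x // f x = n}] [∀ n, Finite {y // g y = n}] :
    ofGrading f a * ofGrading g b =
      ofGrading (fun z : α × β => f z.1 + g z.2) (fun z => a z.1 * b z.2) := by
  have := fun n => Fintype.ofFinite {x // f x = n}
  have := fun n => Fintype.ofFinite {y // g y = n}
  ext n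
  rw [coeff_mul, coeff_ofGrading, ← finsum_comp_equiv (sigmaAntidiagonalEquiv f g n).symm,
    finsum_eq_sum_of_fintype, Fintype.sum_sigma, ← sum_coe_sort (antidiagonal n)]
  refine sum_congr rfl fun p _ => ?_
  simp only [coeff_ofGrading, finsum_eq_sum_of_fintype, Fintype.sum_mul_sum, Fintype.sum_prod_type]
  rfl

end PowerSeries

namespace PTree

theorem one_le_size : ∀ t : PTree, 1 ≤ t.size
  | .node _ => by simp [size]

theorem sizeList_eq_zero_iff {l : List PTree} : sizeList l = 0 ↔ l = [] := by
  cases l with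
  | nil => simp [sizeList]
  | cons t ts => have := one_le_size t; simp [sizeList]; omega

theorem finite_setOf_sizeList_lt (n : ℕ) : {l : List PTree | sizeList l < n}.Finite := by
  induction n with
  | zero => simp
  | succ n ih =>
    refine ((ih.image2 (fun cs ts => node cs :: ts) ih).insert []).subset ?_
    rintro (_ | ⟨⟨cs⟩, ts⟩) h
    · simp
    · simp only [Set.mem_ofPred_eq, sizeList, size] at h
      exact Or.inr ⟨cs, by simp; omega, ts, by simp; omega, rfl⟩

instance finite_sizeList_eq (n : ℕ) : Finite {l : List PTree // sizeList l = n} :=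
  ((finite_setOf_sizeList_lt (n + 1)).subset fun l (h : sizeList l = n) => by
    simp [h]).to_subtype

instance finite_size_eq (n : ℕ) : Finite {t : PTree // t.size = n} :=
  ((finite_setOf_sizeList_lt (n + 1)).preimage (List.singleton_injective.injOn) |>.subset
    fun t (h : t.size = n) => by simp [sizeList, h]).to_subtype

open PowerSeries

section Weight

variable {M : Type*} [CommMonoid M] (ρ : ℕ+ → M)

def weight (t : PTree) : M := (t.hooks.map ρ).prod

def forestWeight (l : List PTree) : M := ((hooksList l).map ρ).prod

@[simp]
theorem forestWeight_nil : forestWeight ρ [] = 1 := by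
  simp [forestWeight, hooksList]

@[simp]
theorem forestWeight_cons (t : PTree) (ts : List PTree) :
    forestWeight ρ (t :: ts) = weight ρ t * forestWeight ρ ts := by
  simp [forestWeight, weight, hooksList]

theorem weight_node (cs : List PTree) :
    weight ρ (node cs) = ρ (sizeList cs).succPNat * forestWeight ρ cs :=
  (congrArg Multiset.prod (Multiset.map_cons ρ _ _)).trans (Multiset.prod_cons _ _)

end Weight

def nodeEquiv (n : ℕ) : {l : List PTree // sizeList l = n} ≃ {t : PTree // t.size = n + 1} where
  toFun l := ⟨node l, by simp [size, l.2]⟩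
  invFun
    | ⟨node cs, h⟩ => ⟨cs, by simpa [size] using h⟩
  left_inv _ := rfl
  right_inv := by rintro ⟨⟨cs⟩, h⟩; rfl

def consEquiv (n : ℕ) :
    {z : PTree × List PTree // z.1.size + sizeList z.2 = n + 1} ≃
      {l : List PTree // sizeList l = n + 1} where
  toFun z := ⟨z.1.1 :: z.1.2, z.2⟩
  invFun
    | ⟨t :: ts, h⟩ => ⟨(t, ts), h⟩
    | ⟨[], h⟩ => absurd h (by simp [sizeList])
  left_inv _ := rfl
  right_inv := by
    rintro ⟨_ | ⟨t, ts⟩, h⟩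
    · simp [sizeList] at h
    · rfl

variable {R : Type*} [CommSemiring R] (ρ : ℕ+ → R)

noncomputable def treeSeries : R⟦X⟧ := ofGrading size (weight ρ)

noncomputable def forestSeries : R⟦X⟧ := ofGrading sizeList (forestWeight ρ)

theorem coeff_treeSeries (n : ℕ) :
    coeff n (treeSeries ρ) = ∑ᶠ t : {t : PTree // t.size = n}, weight ρ t :=
  coeff_ofGrading _ _ _

@[simp]
theorem constantCoeff_treeSeries : constantCoeff (treeSeries ρ) = 0 := by
  have : IsEmpty {t : PTree // t.size = 0} := ⟨fun t => by have := one_le_size t.1; omega⟩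
  rw [← coeff_zero_eq_constantCoeff_apply, coeff_treeSeries, finsum_of_isEmpty]

theorem coeff_succ_treeSeries (n : ℕ) :
    coeff (n + 1) (treeSeries ρ) = ρ n.succPNat * coeff n (forestSeries ρ) := by
  rw [coeff_treeSeries, forestSeries, coeff_ofGrading, ← finsum_comp_equiv (nodeEquiv n),
    mul_finsum' _ _ (Set.toFinite _)]
  refine finsum_congr fun l => ?_
  rw [nodeEquiv, Equiv.coe_fn_mk, weight_node, l.2]

@[simp]
theorem constantCoeff_forestSeries : constantCoeff (forestSeries ρ) = 1 := by
  let : Unique {l : List PTree // sizeList l = 0} :=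
    ⟨⟨⟨[], rfl⟩⟩, fun l => Subtype.ext (sizeList_eq_zero_iff.1 l.2)⟩
  rw [← coeff_zero_eq_constantCoeff_apply, forestSeries, coeff_ofGrading, finsum_unique]
  exact forestWeight_nil ρ

theorem forestSeries_eq_one_add_treeSeries_mul :
    forestSeries ρ = 1 + treeSeries ρ * forestSeries ρ := by
  ext (_ | n)
  · simp
  rw [map_add, coeff_one, if_neg n.succ_ne_zero, zero_add, treeSeries, forestSeries,
    ofGrading_mul, coeff_ofGrading, coeff_ofGrading, ← finsum_comp_equiv (consEquiv n)]
  exact finsum_congr fun z => forestWeight_cons ρ _ _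

theorem inv_one_sub_treeSeries {K : Type*} [Field K] (ρ : ℕ+ → K) :
    (1 - treeSeries ρ)⁻¹ = forestSeries ρ := by
  rw [PowerSeries.inv_eq_iff_mul_eq_one (by simp)]
  linear_combination forestSeries_eq_one_add_treeSeries_mul ρ

end PTree

/-- The expansion formula for plane trees. -/
theorem expansion_formula_plane_trees {K : Type*} [Field K] (ρ : ℕ+ → K)
    (f : PowerSeries K) (h0 : PowerSeries.constantCoeff f = 0)
    (hf : ∀ n : ℕ, 1 ≤ n → PowerSeries.coeff n f =
      ∑ᶠ T : {t : PTree // t.size = n}, ((T : PTree).hooks.map fun h => ρ h).prod)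
    (n : ℕ+) (hne : PowerSeries.coeff ((n : ℕ) - 1) (1 - f)⁻¹ ≠ 0) :
    ρ n = PowerSeries.coeff (n : ℕ) f /
      PowerSeries.coeff ((n : ℕ) - 1) (1 - f)⁻¹ := by
  obtain rfl : f = PTree.treeSeries ρ := by
    ext (_ | m)
    · simp [h0]
    · exact (hf (m + 1) m.succ_pos).trans (PTree.coeff_treeSeries ρ _).symm
  obtain ⟨m, rfl⟩ : ∃ m : ℕ, m.succPNat = n := ⟨n.natPred, n.succPNat_natPred⟩
  rw [PTree.inv_one_sub_treeSeries] at hne ⊢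
  simp only [Nat.succPNat_coe, Nat.succ_eq_add_one, Nat.add_sub_cancel] at hne ⊢
  rw [PTree.coeff_succ_treeSeries, mul_div_cancel_right₀ _ hne]
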